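/- Brezis–Browder style maximality argument in a special case: let (A, ≼) be a nonempty partially ordered set and N : A → ℝ a function bounded above such that every increasing sequence in A has an upper bound in A and N is monotone (a ≼ b implies N(a) ≤ N(b)). Then there exists a* ∈ A such that for every b ∈ A with a* ≼ b one has N(b) = N(a*). -/
import Mathlib


theorem stmt_15 {A : Type*} [Preorder A] [Nonempty A] (N : A → ℝ)
    (hbdd : BddAbove (Set.range N))
    (hmono : ∀ a b : A, a ≤ b → N a ≤ N b)
    (hchain : ∀ u : ℕ → A, (∀ n, u n ≤ u (n + 1)) → ∃ b : A, ∀ n, u n ≤ b) :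
    ∃ astar : A, ∀ b : A, astar ≤ b → N b = N astar := by
  by_contra hcon
  push_neg at hcon
  -- S a = sup of N over {b : a ≤ b}
  set S : A → ℝ := fun a => sSup (N '' Set.Ici a) with hS
  have hbddi : ∀ a : A, BddAbove (N '' Set.Ici a) := fun a =>
    hbdd.mono (Set.image_subset_range N _)
  have hne : ∀ a : A, (N '' Set.Ici a).Nonempty := fun a =>
    ⟨N a, a, le_refl a, rfl⟩
  have hle : ∀ a c : A, a ≤ c → N c ≤ S a := fun a c hac =>
    le_csSup (hbddi a) ⟨c, hac, rfl⟩
  -- choose successors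
  have hstep : ∀ (a : A) (n : ℕ), ∃ b : A, a ≤ b ∧ S a - (1/2 : ℝ)^n < N b := by
    intro a n
    have hpos : S a - (1/2:ℝ)^n < S a := by
      have : (0:ℝ) < (1/2:ℝ)^n := by positivity
      linarith
    obtain ⟨x, ⟨c, hc, rfl⟩, hx⟩ := exists_lt_of_lt_csSup (hne a) hpos
    exact ⟨c, hc, hx⟩
  choose f hf1 hf2 using hstep
  set u : ℕ → A := fun n => Nat.rec (Classical.arbitrary A) (fun n a => f a n) n with hu
  have hmonu : ∀ n, u n ≤ u (n + 1) := fun n => hf1 (u n) n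
  obtain ⟨b, hb⟩ := hchain u hmonu
  obtain ⟨c, hbc, hNc⟩ := hcon b
  have hgt : N b < N c := lt_of_le_of_ne (hmono _ _ hbc) (Ne.symm hNc)
  -- For all n : N c ≤ S (u n) < N (u (n+1)) + (1/2)^n ≤ N b + (1/2)^n
  have key : ∀ n : ℕ, N c ≤ N b + (1/2:ℝ)^n := by
    intro n
    have h1 : N c ≤ S (u n) := hle (u n) c (le_trans (hb n) hbc)
    have h2 : S (u n) - (1/2:ℝ)^n < N (u (n+1)) := hf2 (u n) n
    have h3 : N (u (n+1)) ≤ N b := hmono _ _ (hb (n+1))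
    linarith
  obtain ⟨n, hn⟩ := exists_pow_lt_of_lt_one (by linarith : (0:ℝ) < N c - N b)
    (by norm_num : (1/2:ℝ) < 1)
  have := key n
  linarith
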